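/- arXiv:2105.03493 — 5 statements merged into one kernel-verified Lean document; each statement's English description precedes it below -/
import Mathlib

section
/- Let I₀,…,I_{n−1} be mutually independent nonnegative random variables with continuous cumulative distribution functions F₀,…,F_{n−1}, and let 0 = t⁰ ≤ t¹ ≤ … ≤ t^{n−1} be fixed reals, with the convention t^n = ∞. Let J be the smallest index j ∈ {0,…,n−1} such that I_j < t^{j+1} − t^j (such an index exists since t^n = ∞), and define T = t^J + I_J. Then for every t ≥ 0, P(T ≤ t) = Σ_{j=0}^{n−1} F_j(min{t, t^{j+1}} − t^j)·∏_{k=0}^{j−1}(1 − F_k(t^{k+1} − t^k)), with the conventions F_j(s) = 0 for s ≤ 0 and the empty product equal to 1. -/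
/-!
On `{J = j}` we have `T = t^j + I_j`, so `{J = j, T ≤ s}` is the intersection of the events
`I_k ≥ t^{k+1} - t^k`, `k < j`, with one event about `I_j` alone: `I_j ≤ s - t^j`, and
`I_j < t^{j+1} - t^j` unless `j` is the last stage. Independence factors its probability, and
since the `F_k` are continuous there are no atoms, so the strict inequalities cost nothing: the
factors are `1 - F_k(t^{k+1} - t^k)` and `F_j(min(s, t^{j+1}) - t^j)`. Sum over `j`.
-/

open MeasureTheory ProbabilityTheory Set

namespace ProbabilityTheory

section ContinuousCDF

variable {μ : Measure ℝ} [IsProbabilityMeasure μ]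

lemma measure_singleton_eq_zero_of_continuous_cdf (h : Continuous (cdf μ)) (a : ℝ) :
    μ {a} = 0 := by
  rw [← measure_cdf μ, StieltjesFunction.measure_singleton, h.continuousWithinAt.leftLim_eq,
    sub_self, ENNReal.ofReal_zero]

lemma Iio_ae_eq_Iic_of_continuous_cdf (h : Continuous (cdf μ)) (a : ℝ) : Iio a =ᵐ[μ] Iic a :=
  Iio_ae_eq_Iic' (measure_singleton_eq_zero_of_continuous_cdf h a)

lemma measureReal_Ici_of_continuous_cdf (h : Continuous (cdf μ)) (a : ℝ) :
    μ.real (Ici a) = 1 - cdf μ a := by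
  rw [← compl_Iio, probReal_compl_eq_one_sub measurableSet_Iio,
    measureReal_congr (Iio_ae_eq_Iic_of_continuous_cdf h a), cdf_eq_real]

lemma measureReal_Iic_inter_Iio_of_continuous_cdf (h : Continuous (cdf μ)) (a b : ℝ) :
    μ.real (Iic a ∩ Iio b) = cdf μ (min a b) := by
  rw [cdf_eq_real, ← Iic_inter_Iic]
  exact measureReal_congr ((ae_eq_refl _).inter (Iio_ae_eq_Iic_of_continuous_cdf h b))

end ContinuousCDF

section Independence

variable {Ω β : Type*} [MeasurableSpace Ω] [mβ : MeasurableSpace β] {μ : Measure Ω} {n : ℕ}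
  {X : ℕ → Ω → β}

lemma iIndepFun.measure_biInter_range (h : iIndepFun (fun i : Fin n => X i) μ) {m : ℕ}
    (hm : m ≤ n) {E : ℕ → Set Ω} (hE : ∀ k, MeasurableSet[mβ.comap (X k)] (E k)) :
    μ (⋂ k ∈ Finset.range m, E k) = ∏ k ∈ Finset.range m, μ (E k) := by
  have hlt : ∀ k ∈ Finset.range m, k < n := fun k hk => (Finset.mem_range.1 hk).trans_le hm
  rw [← Finset.map_valEmbedding_attachFin hlt, Finset.prod_map, Finset.map_eq_image,
    Finset.set_biInter_finset_image]
  exact h.meas_biInter fun i _ => hE i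

lemma iIndepFun.measure_biInter_range_inter (h : iIndepFun (fun i : Fin n => X i) μ) {j : ℕ}
    (hj : j < n) {E : ℕ → Set Ω} {F : Set Ω} (hE : ∀ k, MeasurableSet[mβ.comap (X k)] (E k))
    (hF : MeasurableSet[mβ.comap (X j)] F) :
    μ ((⋂ k ∈ Finset.range j, E k) ∩ F) = (∏ k ∈ Finset.range j, μ (E k)) * μ F := by
  have hE' : ∀ k, MeasurableSet[mβ.comap (X k)] (Function.update E j F k) := by
    intro k
    rcases eq_or_ne k j with rfl | hk
    · simpa using hF
    · simpa [hk] using hE k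
  have key := h.measure_biInter_range hj hE'
  rw [Finset.range_add_one, Finset.set_biInter_insert_update _ Finset.notMem_range_self,
    Finset.prod_insert Finset.notMem_range_self, Function.update_self] at key
  rw [inter_comm, key, mul_comm]
  congr 1
  exact Finset.prod_congr rfl fun k hk => by rw [Function.update_of_ne (Finset.mem_range.1 hk).ne]

end Independence

end ProbabilityTheory

lemma eq_iff_of_first_index {p : ℕ → Prop} {n m j : ℕ} (hm : m < n) (hm_succ : m + 1 = n ∨ p m)
    (hm_min : ∀ k < m, ¬ p k) (hj : j < n) :
    m = j ↔ (∀ k < j, ¬ p k) ∧ (j + 1 = n ∨ p j) := by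
  refine ⟨fun hmj => hmj ▸ ⟨hm_min, hm_succ⟩, fun ⟨hj_min, hj_succ⟩ => ?_⟩
  rcases lt_trichotomy m j with hlt | heq | hgt
  · exact absurd (hm_succ.resolve_left (by omega)) (hj_min m hlt)
  · exact heq
  · exact absurd (hj_succ.resolve_left (by omega)) (hm_min j hgt)

section SequentialWaitingTimes

variable {Ω : Type*} (I : ℕ → Ω → ℝ) (n : ℕ) (t : ℕ → ℝ) (s : ℝ)

def stageWindow (j : ℕ) : Set ℝ :=
  if j + 1 = n then Iic (s - t j) else Iic (s - t j) ∩ Iio (t (j + 1) - t j)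

/-- The event `{J = j, T ≤ s}`, written without `J`, which need not be measurable. -/
def stageEvent (j : ℕ) : Set Ω :=
  (⋂ k ∈ Finset.range j, I k ⁻¹' Ici (t (k + 1) - t k)) ∩ I j ⁻¹' stageWindow n t s j

variable {I n t s}

lemma mem_stageWindow_iff {j : ℕ} {x : ℝ} :
    x ∈ stageWindow n t s j ↔ x ≤ s - t j ∧ (j + 1 = n ∨ x < t (j + 1) - t j) := by
  unfold stageWindow
  split_ifs with h <;> simp [h]

lemma measurableSet_stageWindow (j : ℕ) : MeasurableSet (stageWindow n t s j) := by
  unfold stageWindow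
  split_ifs
  exacts [measurableSet_Iic, measurableSet_Iic.inter measurableSet_Iio]

lemma measurableSet_stageEvent [MeasurableSpace Ω] (hI : ∀ j, Measurable (I j)) (j : ℕ) :
    MeasurableSet (stageEvent I n t s j) :=
  (Finset.measurableSet_biInter _ fun k _ => measurableSet_Ici.preimage (hI k)).inter
    ((measurableSet_stageWindow j).preimage (hI j))

lemma measureReal_stageEvent [MeasurableSpace Ω] {P : Measure Ω} (hI : ∀ j, Measurable (I j))
    (hindep : iIndepFun (fun j : Fin n => I j) P) {j : ℕ} (hj : j < n) :
    P.real (stageEvent I n t s j) = (∏ k ∈ Finset.range j, (P.map (I k)).real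
      (Ici (t (k + 1) - t k))) * (P.map (I j)).real (stageWindow n t s j) := by
  simp only [measureReal_def, stageEvent, Measure.map_apply (hI _) measurableSet_Ici,
    Measure.map_apply (hI _) (measurableSet_stageWindow _)]
  rw [hindep.measure_biInter_range_inter hj (fun k => ⟨_, measurableSet_Ici, rfl⟩)
    ⟨_, measurableSet_stageWindow j, rfl⟩, ENNReal.toReal_mul, ENNReal.toReal_prod]

lemma measureReal_stageWindow_of_continuous_cdf {μ : Measure ℝ} [IsProbabilityMeasure μ]
    (h : Continuous (cdf μ)) (j : ℕ) :
    μ.real (stageWindow n t s j) = cdf μ ((if j + 1 = n then s else min s (t (j + 1))) - t j) := by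
  unfold stageWindow
  split_ifs
  · exact (cdf_eq_real μ _).symm
  · rw [measureReal_Iic_inter_Iio_of_continuous_cdf h, min_sub_sub_right]

variable {J : Ω → ℕ} {T : Ω → ℝ}
  (hJ_lt : ∀ ω, J ω < n)
  (hJ_succ : ∀ ω, J ω + 1 = n ∨ I (J ω) ω < t (J ω + 1) - t (J ω))
  (hJ_min : ∀ ω k, k < J ω → t (k + 1) - t k ≤ I k ω)
  (hT : ∀ ω, T ω = t (J ω) + I (J ω) ω)
include hJ_lt hJ_succ hJ_min hT

lemma mem_stageEvent_iff {j : ℕ} (hj : j < n) (ω : Ω) :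
    ω ∈ stageEvent I n t s j ↔ J ω = j ∧ T ω ≤ s := by
  have hJ := eq_iff_of_first_index (p := fun k => I k ω < t (k + 1) - t k) (hJ_lt ω) (hJ_succ ω)
    (fun k hk => not_lt.2 (hJ_min ω k hk)) hj
  simp only [not_lt] at hJ
  simp only [stageEvent, mem_inter_iff, mem_iInter₂, Finset.mem_range, mem_preimage, mem_Ici,
    mem_stageWindow_iff]
  constructor
  · rintro ⟨h_min, h_le, h_succ⟩
    have hJj : J ω = j := hJ.2 ⟨h_min, h_succ⟩
    exact ⟨hJj, by rw [hT, hJj]; linarith⟩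
  · rintro ⟨hJj, hTs⟩
    obtain ⟨h_min, h_succ⟩ := hJ.1 hJj
    rw [hT, hJj] at hTs
    exact ⟨h_min, by linarith, h_succ⟩

lemma setOf_le_eq_biUnion_stageEvent :
    {ω | T ω ≤ s} = ⋃ j ∈ Finset.range n, stageEvent I n t s j := by
  ext ω
  simp only [mem_ofPred_eq, mem_iUnion, Finset.mem_range, exists_prop]
  constructor
  · exact fun hTs => ⟨J ω, hJ_lt ω,
      (mem_stageEvent_iff hJ_lt hJ_succ hJ_min hT (hJ_lt ω) ω).2 ⟨rfl, hTs⟩⟩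
  · rintro ⟨j, hj, hω⟩
    exact ((mem_stageEvent_iff hJ_lt hJ_succ hJ_min hT hj ω).1 hω).2

lemma pairwiseDisjoint_stageEvent :
    (↑(Finset.range n) : Set ℕ).PairwiseDisjoint (stageEvent I n t s) := by
  intro i hi j hj hij
  simp only [Finset.coe_range, mem_Iio] at hi hj
  refine disjoint_left.2 fun ω hωi hωj => hij ?_
  rw [← ((mem_stageEvent_iff hJ_lt hJ_succ hJ_min hT hi ω).1 hωi).1,
    ((mem_stageEvent_iff hJ_lt hJ_succ hJ_min hT hj ω).1 hωj).1]

end SequentialWaitingTimes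

theorem prob_le_of_sequential_waiting_times_general
    {Ω : Type*} [MeasurableSpace Ω] (P : Measure Ω) [IsProbabilityMeasure P]
    (n : ℕ)
    (I : ℕ → Ω → ℝ)
    (hI_meas : ∀ j, Measurable (I j))
    (hindep : iIndepFun (fun j : Fin n => I j) P)
    (F : ℕ → ℝ → ℝ)
    (hF : ∀ j u, F j u = (P {ω | I j ω ≤ u}).toReal)
    (hF_cont : ∀ j, Continuous (F j))
    (t : ℕ → ℝ)
    (J : Ω → ℕ) (T : Ω → ℝ)
    (hJ_lt : ∀ ω, J ω < n)
    (hJ_succ : ∀ ω, J ω + 1 = n ∨ I (J ω) ω < t (J ω + 1) - t (J ω))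
    (hJ_min : ∀ ω k, k < J ω → t (k + 1) - t k ≤ I k ω)
    (hT : ∀ ω, T ω = t (J ω) + I (J ω) ω)
    (s : ℝ) :
    (P {ω | T ω ≤ s}).toReal
      = ∑ j ∈ Finset.range n,
          F j ((if j + 1 = n then s else min s (t (j + 1))) - t j) *
            ∏ k ∈ Finset.range j, (1 - F k (t (k + 1) - t k)) := by
  have _ : ∀ j, IsProbabilityMeasure (P.map (I j)) := fun j =>
    Measure.isProbabilityMeasure_map (hI_meas j).aemeasurable
  have hcdf : ∀ j, cdf (P.map (I j)) = F j := fun j => funext fun u => by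
    rw [cdf_eq_real, map_measureReal_apply (hI_meas j) measurableSet_Iic, hF, measureReal_def]
    rfl
  have hcont : ∀ j, Continuous (cdf (P.map (I j))) := fun j => hcdf j ▸ hF_cont j
  rw [← measureReal_def, setOf_le_eq_biUnion_stageEvent hJ_lt hJ_succ hJ_min hT,
    measureReal_biUnion_finset (pairwiseDisjoint_stageEvent hJ_lt hJ_succ hJ_min hT)
      fun j _ => measurableSet_stageEvent hI_meas j]
  refine Finset.sum_congr rfl fun j hj => ?_
  rw [measureReal_stageEvent hI_meas hindep (Finset.mem_range.1 hj),
    measureReal_stageWindow_of_continuous_cdf (hcont j), hcdf, mul_comm]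
  congr 1
  refine Finset.prod_congr rfl fun k _ => ?_
  rw [measureReal_Ici_of_continuous_cdf (hcont k), hcdf]

/-- Distribution of the infection time built from the sequential decomposition of
equation (1): `T = t^J + I_J` where `J` is the first index `j` with
`I_j < t^{j+1} - t^j` (with `t⁰ = 0` and the convention `t^n = ∞`).  Then
`P(T ≤ s) = Σ_{j<n} F_j(min{s, t^{j+1}} - t^j) ∏_{k<j} (1 - F_k(t^{k+1} - t^k))`,
where for `j = n-1` the minimum `min{s, t^n}` is `s`. -/
theorem prob_le_of_sequential_waiting_times
    {Ω : Type*} [MeasurableSpace Ω] (P : Measure Ω) [IsProbabilityMeasure P]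
    (n : ℕ) (hn : 1 ≤ n)
    (I : ℕ → Ω → ℝ)
    (hI_meas : ∀ j, Measurable (I j))
    (hI_nonneg : ∀ j ω, 0 ≤ I j ω)
    (hindep : iIndepFun (fun j : Fin n => I j) P)
    (F : ℕ → ℝ → ℝ)
    (hF : ∀ j u, F j u = (P {ω | I j ω ≤ u}).toReal)
    (hF_cont : ∀ j, Continuous (F j))
    (t : ℕ → ℝ) (ht0 : t 0 = 0)
    (hmono : ∀ k, k + 1 < n → t k ≤ t (k + 1))
    (J : Ω → ℕ) (T : Ω → ℝ)
    (hJ_lt : ∀ ω, J ω < n)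
    (hJ_succ : ∀ ω, J ω + 1 = n ∨ I (J ω) ω < t (J ω + 1) - t (J ω))
    (hJ_min : ∀ ω k, k < J ω → t (k + 1) - t k ≤ I k ω)
    (hT : ∀ ω, T ω = t (J ω) + I (J ω) ω)
    (s : ℝ) (hs : 0 ≤ s) :
    (P {ω | T ω ≤ s}).toReal
      = ∑ j ∈ Finset.range n,
          F j ((if j + 1 = n then s else min s (t (j + 1))) - t j) *
            ∏ k ∈ Finset.range j, (1 - F k (t (k + 1) - t k)) :=
  prob_le_of_sequential_waiting_times_general P n I hI_meas hindep F hF hF_cont t J T hJ_lt hJ_succ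
    hJ_min hT s
end

section
/- Under the pairwise Cox-type hazard model, fix t ≥ 0, distinct individuals i ≠ j, treatments x_i and x_{(j)} and covariates l of all individuals, and an infection history h_{(i,j)} for the individuals other than i and j. Let h'_j be the history in which j is infected at a time t'_j < t and h_j the history in which j remains uninfected through time t. If γ(t − t'_j) > 0, then [λ_i(t | x_j = 1, x_{(j)}, h'_j, h_{(i,j)}, l) − λ_i(t | x_j = 1, x_{(j)}, h_j, h_{(i,j)}, l)] / [λ_i(t | x_j = 0, x_{(j)}, h'_j, h_{(i,j)}, l) − λ_i(t | x_j = 0, x_{(j)}, h_j, h_{(i,j)}, l)] = exp(β₂); that is, the controlled infectiousness hazard ratio equals exp(β₂), regardless of t, the treatments of individuals other than j, the infection history of individuals other than j, and the cluster size. -/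
/-!
Changing only `j`'s infection history changes only `j`'s summand in `i`'s hazard, so each
increment equals `exp(β₁ x_i + θ₁ l_i) · γ(t - t'_j) · exp(β₂ x_j + θ₂ l_j)`. In the ratio all
factors cancel except `exp(β₂ · 1) / exp(β₂ · 0)`.
-/

open MeasureTheory ENNReal

/-- Pairwise Cox-type infection hazard for individual `i` at time `t`:
`λ_i(t | x, h, l) = exp(β₁ x_i + θ₁ l_i) ·
  (α(t) + Σ_{j≠i} 1{t > t_j} γ(t - t_j) exp(β₂ x_j + θ₂ l_j))`,
where the infection history assigns infection time `τ j ∈ (0,∞]` to individual `j`. -/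
noncomputable def clusterHazard (n : ℕ) (β₁ β₂ θ₁ θ₂ : ℝ) (α γ : ℝ → ℝ)
    (x l : Fin n → ℝ) (τ : Fin n → ℝ≥0∞) (i : Fin n) (t : ℝ) : ℝ :=
  Real.exp (β₁ * x i + θ₁ * l i) *
    (α t + ∑ j ∈ Finset.univ.erase i,
      if τ j < ENNReal.ofReal t then γ (t - (τ j).toReal) * Real.exp (β₂ * x j + θ₂ * l j)
      else 0)

noncomputable def transmissionTerm (β₂ θ₂ : ℝ) (γ : ℝ → ℝ) (t : ℝ) (τj : ℝ≥0∞) (xj lj : ℝ) :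
    ℝ :=
  if τj < ENNReal.ofReal t then γ (t - τj.toReal) * Real.exp (β₂ * xj + θ₂ * lj) else 0

section transmissionTerm

variable {β₂ θ₂ : ℝ} {γ : ℝ → ℝ} {t : ℝ} {xj lj : ℝ}

theorem transmissionTerm_top : transmissionTerm β₂ θ₂ γ t ⊤ xj lj = 0 :=
  if_neg not_top_lt

theorem transmissionTerm_ofReal {s : ℝ} (hs : 0 < s) (hst : s < t) :
    transmissionTerm β₂ θ₂ γ t (ENNReal.ofReal s) xj lj =
      γ (t - s) * Real.exp (β₂ * xj + θ₂ * lj) := by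
  have hlt : ENNReal.ofReal s < ENNReal.ofReal t :=
    (ENNReal.ofReal_lt_ofReal_iff (hs.trans hst)).2 hst
  rw [transmissionTerm, if_pos hlt, ENNReal.toReal_ofReal hs.le]

end transmissionTerm

section clusterHazard

variable {n : ℕ} {β₁ β₂ θ₁ θ₂ : ℝ} {α γ : ℝ → ℝ} {x l : Fin n → ℝ} {τ : Fin n → ℝ≥0∞}
  {i j : Fin n} {t : ℝ}

theorem clusterHazard_eq :
    clusterHazard n β₁ β₂ θ₁ θ₂ α γ x l τ i t =
      Real.exp (β₁ * x i + θ₁ * l i) *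
        (α t + ∑ k ∈ Finset.univ.erase i, transmissionTerm β₂ θ₂ γ t (τ k) (x k) (l k)) :=
  rfl

theorem clusterHazard_update_sub_update_top (hij : i ≠ j) (v : ℝ≥0∞) :
    clusterHazard n β₁ β₂ θ₁ θ₂ α γ x l (Function.update τ j v) i t
        - clusterHazard n β₁ β₂ θ₁ θ₂ α γ x l (Function.update τ j ⊤) i t =
      Real.exp (β₁ * x i + θ₁ * l i) * transmissionTerm β₂ θ₂ γ t v (x j) (l j) := by
  have hj : j ∈ Finset.univ.erase i := Finset.mem_erase.2 ⟨hij.symm, Finset.mem_univ j⟩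
  have split : ∀ w : ℝ≥0∞,
      ∑ k ∈ Finset.univ.erase i, transmissionTerm β₂ θ₂ γ t (Function.update τ j w k) (x k) (l k)
        = transmissionTerm β₂ θ₂ γ t w (x j) (l j) +
          ∑ k ∈ (Finset.univ.erase i).erase j, transmissionTerm β₂ θ₂ γ t (τ k) (x k) (l k) := by
    intro w
    rw [← Finset.add_sum_erase _ _ hj, Function.update_self]
    congr 1
    refine Finset.sum_congr rfl fun k hk => ?_
    rw [Function.update_of_ne (Finset.ne_of_mem_erase hk)]
  rw [clusterHazard_eq, clusterHazard_eq, split, split, transmissionTerm_top]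
  ring

end clusterHazard

theorem controlled_infectiousness_hazard_ratio_general
    (n : ℕ) (β₁ β₂ θ₁ θ₂ : ℝ) (α γ : ℝ → ℝ)
    (x l : Fin n → ℝ) (τ : Fin n → ℝ≥0∞)
    (i j : Fin n) (hij : i ≠ j)
    (t t'j : ℝ) (ht'j_pos : 0 < t'j) (ht'j_lt : t'j < t)
    (hγ_pos : 0 < γ (t - t'j)) :
    (clusterHazard n β₁ β₂ θ₁ θ₂ α γ (Function.update x j 1) l
        (Function.update τ j (ENNReal.ofReal t'j)) i t
      - clusterHazard n β₁ β₂ θ₁ θ₂ α γ (Function.update x j 1) l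
        (Function.update τ j ⊤) i t) /
    (clusterHazard n β₁ β₂ θ₁ θ₂ α γ (Function.update x j 0) l
        (Function.update τ j (ENNReal.ofReal t'j)) i t
      - clusterHazard n β₁ β₂ θ₁ θ₂ α γ (Function.update x j 0) l
        (Function.update τ j ⊤) i t)
      = Real.exp β₂ := by
  simp only [clusterHazard_update_sub_update_top hij, transmissionTerm_ofReal ht'j_pos ht'j_lt,
    Function.update_self, Function.update_of_ne hij]
  rw [mul_div_mul_left _ _ (Real.exp_pos _).ne', mul_div_mul_left _ _ hγ_pos.ne',
    ← Real.exp_sub]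
  ring_nf

/-- Controlled infectiousness hazard ratio: the increment in `i`'s hazard caused by
`j`'s infection at time `t'_j < t` (relative to `j` uninfected), with `j` treated,
divided by the same increment with `j` untreated, equals `exp(β₂)`, regardless of `t`,
the treatments of individuals other than `j`, the infection history of individuals
other than `j`, and the cluster size. -/
theorem controlled_infectiousness_hazard_ratio
    (n : ℕ) (β₁ β₂ θ₁ θ₂ : ℝ) (α γ : ℝ → ℝ)
    (x l : Fin n → ℝ) (τ : Fin n → ℝ≥0∞)
    (hτ_pos : ∀ k, 0 < τ k)
    (i j : Fin n) (hij : i ≠ j)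
    (t t'j : ℝ) (ht'j_pos : 0 < t'j) (ht'j_lt : t'j < t)
    (hγ_pos : 0 < γ (t - t'j)) :
    (clusterHazard n β₁ β₂ θ₁ θ₂ α γ (Function.update x j 1) l
        (Function.update τ j (ENNReal.ofReal t'j)) i t
      - clusterHazard n β₁ β₂ θ₁ θ₂ α γ (Function.update x j 1) l
        (Function.update τ j ⊤) i t) /
    (clusterHazard n β₁ β₂ θ₁ θ₂ α γ (Function.update x j 0) l
        (Function.update τ j (ENNReal.ofReal t'j)) i t
      - clusterHazard n β₁ β₂ θ₁ θ₂ α γ (Function.update x j 0) l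
        (Function.update τ j ⊤) i t)
      = Real.exp β₂ :=
  controlled_infectiousness_hazard_ratio_general n β₁ β₂ θ₁ θ₂ α γ x l τ i j hij t t'j ht'j_pos
    ht'j_lt hγ_pos
end

section
/- Under the pairwise Cox-type hazard model with all treatments set to zero (x = 0), with exposure-controlled expected potential infection outcome E[Y_i(t; x, h)] = 1 − exp(−∫₀ᵗ λ_i(s | x, h, l) ds), suppose α and γ are locally integrable and γ(s) > 0 for all s > 0. Let h and h' be infection histories with infection times (t_j)_{j≠i} and (t'_j)_{j≠i} satisfying t_j ≤ t'_j for every j ≠ i, and suppose there exists some j ≠ i with t_j < t'_j and t_j < t. Then the exposure-controlled contagion effect is positive: E[Y_i(t; 0, h)] − E[Y_i(t; 0, h')] > 0. -/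
open MeasureTheory ENNReal

/-- Exposure-controlled expected potential infection outcome
`E[Y_i(t; x, h)] = 1 - exp(-∫₀ᵗ λ_i(s | x, h, l) ds)`. -/
noncomputable def expectedOutcome (n : ℕ) (β₁ β₂ θ₁ θ₂ : ℝ) (α γ : ℝ → ℝ)
    (x l : Fin n → ℝ) (τ : Fin n → ℝ≥0∞) (i : Fin n) (t : ℝ) : ℝ :=
  1 - Real.exp (-∫ s in (0:ℝ)..t, clusterHazard n β₁ β₂ θ₁ θ₂ α γ x l τ i s)

/-! Whatever the treatments, the integrated hazard of `i` on `[0, t]` splits as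
`exp(β₁ xᵢ + θ₁ lᵢ) · (∫₀ᵗ α + Σ_{j ≠ i} Γ(dⱼ) · exp(β₂ xⱼ + θ₂ lⱼ))`, where `Γ(d) = ∫₀ᵈ γ` and
`dⱼ = (t - t_j)⁺` is how long `j` has been infectious by time `t`. The hazards themselves need not
be ordered, since `γ` need not be monotone, but `Γ` is strictly increasing on `[0, ∞)` because
`γ > 0`. Delaying infections increases no `dⱼ` and strictly decreases one that was positive, so
the integrated hazard strictly decreases, and so does `1 - exp(-∫₀ᵗ λᵢ)`. -/

open Set intervalIntegral

noncomputable def contagionKernel (γ : ℝ → ℝ) (a : ℝ≥0∞) (s : ℝ) : ℝ :=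
  if a < ENNReal.ofReal s then γ (s - a.toReal) else 0

section Contagion

variable {γ : ℝ → ℝ} {t : ℝ}

theorem integral_lt_integral_of_pos_of_lt (hγ_pos : ∀ s, 0 < s → 0 < γ s)
    {b c : ℝ} (hγ_int : IntervalIntegrable γ volume 0 c) (hb : 0 ≤ b) (hbc : b < c) :
    ∫ u in (0:ℝ)..b, γ u < ∫ u in (0:ℝ)..c, γ u := by
  have hb_mem : b ∈ uIcc 0 c := by rw [uIcc_of_le (hb.trans hbc.le)]; exact ⟨hb, hbc.le⟩
  have hbc_int : IntervalIntegrable γ volume b c := hγ_int.mono_set (uIcc_subset_uIcc_right hb_mem)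
  rw [← integral_add_adjacent_intervals (hγ_int.mono_set (uIcc_subset_uIcc_left hb_mem)) hbc_int]
  linarith [intervalIntegral_pos_of_pos_on hbc_int (fun s hs => hγ_pos s (hb.trans_lt hs.1)) hbc]

theorem integral_le_integral_of_pos_of_le (hγ_pos : ∀ s, 0 < s → 0 < γ s)
    {b c : ℝ} (hγ_int : IntervalIntegrable γ volume 0 c) (hb : 0 ≤ b) (hbc : b ≤ c) :
    ∫ u in (0:ℝ)..b, γ u ≤ ∫ u in (0:ℝ)..c, γ u := by
  rcases hbc.lt_or_eq with hbc | rfl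
  · exact (integral_lt_integral_of_pos_of_lt hγ_pos hγ_int hb hbc).le
  · rfl

theorem contagionKernel_top : contagionKernel γ ⊤ = 0 := by
  ext s
  simp [contagionKernel]

theorem contagionKernel_ofReal {b : ℝ} (hb : 0 ≤ b) :
    contagionKernel γ (ENNReal.ofReal b) = (Ioi b).indicator fun s => γ (s - b) := by
  ext s
  by_cases hbs : b < s
  · simp [contagionKernel, hbs, hb, hb.trans_lt hbs]
  · simp [contagionKernel, hbs, ENNReal.ofReal_lt_ofReal_iff']

theorem intervalIntegrable_indicator_Ioi_comp_sub (hγ_int : IntervalIntegrable γ volume 0 t)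
    {b : ℝ} (hb : 0 ≤ b) (ht : 0 ≤ t) :
    IntervalIntegrable ((Ioi b).indicator fun s => γ (s - b)) volume 0 t := by
  rw [intervalIntegrable_iff_integrableOn_Ioc_of_le ht,
    integrableOn_indicator_iff measurableSet_Ioi, inter_comm, Ioc_inter_Ioi, sup_of_le_right hb]
  rcases le_or_gt b t with hbt | htb
  · have hshift := (hγ_int.mono_set (uIcc_subset_uIcc_left (b := t) (x := t - b)
      (by rw [uIcc_of_le ht]; exact ⟨by linarith, by linarith⟩))).comp_sub_right b
    rwa [zero_add, sub_add_cancel, intervalIntegrable_iff_integrableOn_Ioc_of_le hbt] at hshift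
  · rw [Ioc_eq_empty_of_le htb.le]
    exact integrableOn_empty

theorem integral_indicator_Ioi_comp_sub {b : ℝ} (hb : 0 ≤ b) (ht : 0 ≤ t) :
    ∫ s in (0:ℝ)..t, (Ioi b).indicator (fun s => γ (s - b)) s
      = ∫ u in (0:ℝ)..max (t - b) 0, γ u := by
  rw [integral_of_le ht, setIntegral_indicator measurableSet_Ioi, Ioc_inter_Ioi,
    sup_of_le_right hb]
  rcases le_or_gt b t with hbt | htb
  · rw [← integral_of_le hbt, integral_comp_sub_right, sub_self, max_eq_left (sub_nonneg.2 hbt)]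
  · rw [Ioc_eq_empty_of_le htb.le, setIntegral_empty, max_eq_right (by linarith), integral_same]

theorem intervalIntegrable_contagionKernel (hγ_int : IntervalIntegrable γ volume 0 t)
    (ht : 0 ≤ t) (a : ℝ≥0∞) : IntervalIntegrable (contagionKernel γ a) volume 0 t := by
  rcases eq_or_ne a ⊤ with rfl | ha
  · rw [contagionKernel_top]
    exact intervalIntegrable_const
  · rw [← ENNReal.ofReal_toReal ha, contagionKernel_ofReal toReal_nonneg]
    exact intervalIntegrable_indicator_Ioi_comp_sub hγ_int toReal_nonneg ht

-- `(ofReal t - a).toReal` is the time `dⱼ` above; truncated subtraction makes it `0` both when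
-- `t ≤ a` and when `a = ⊤`.
theorem integral_contagionKernel (ht : 0 ≤ t) (a : ℝ≥0∞) :
    ∫ s in (0:ℝ)..t, contagionKernel γ a s
      = ∫ u in (0:ℝ)..(ENNReal.ofReal t - a).toReal, γ u := by
  rcases eq_or_ne a ⊤ with rfl | ha
  · simp [contagionKernel_top]
  · obtain ⟨b, hb, rfl⟩ : ∃ b, 0 ≤ b ∧ a = ENNReal.ofReal b :=
      ⟨a.toReal, toReal_nonneg, (ENNReal.ofReal_toReal ha).symm⟩
    rw [contagionKernel_ofReal hb, integral_indicator_Ioi_comp_sub hb ht,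
      ← ENNReal.ofReal_sub _ hb, toReal_ofReal']

theorem toReal_ofReal_sub_le (ht : 0 ≤ t) (a : ℝ≥0∞) : (ENNReal.ofReal t - a).toReal ≤ t :=
  (ENNReal.toReal_mono ENNReal.ofReal_ne_top tsub_le_self).trans (toReal_ofReal ht).le

theorem intervalIntegrable_exposure (hγ_int : IntervalIntegrable γ volume 0 t) (ht : 0 ≤ t)
    (a : ℝ≥0∞) : IntervalIntegrable γ volume 0 (ENNReal.ofReal t - a).toReal :=
  hγ_int.mono_set <| uIcc_subset_uIcc_left <| by
    rw [uIcc_of_le ht]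
    exact ⟨toReal_nonneg, toReal_ofReal_sub_le ht a⟩

theorem integral_exposure_le_of_le (hγ_pos : ∀ s, 0 < s → 0 < γ s)
    (hγ_int : IntervalIntegrable γ volume 0 t) (ht : 0 ≤ t) {a a' : ℝ≥0∞} (h : a ≤ a') :
    ∫ u in (0:ℝ)..(ENNReal.ofReal t - a').toReal, γ u
      ≤ ∫ u in (0:ℝ)..(ENNReal.ofReal t - a).toReal, γ u :=
  integral_le_integral_of_pos_of_le hγ_pos (intervalIntegrable_exposure hγ_int ht a) toReal_nonneg
    (ENNReal.toReal_mono (ENNReal.sub_ne_top ENNReal.ofReal_ne_top) (tsub_le_tsub_left h _))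

theorem integral_exposure_lt_of_lt (hγ_pos : ∀ s, 0 < s → 0 < γ s)
    (hγ_int : IntervalIntegrable γ volume 0 t) (ht : 0 ≤ t) {a a' : ℝ≥0∞} (h : a < a')
    (ha : a < ENNReal.ofReal t) :
    ∫ u in (0:ℝ)..(ENNReal.ofReal t - a').toReal, γ u
      < ∫ u in (0:ℝ)..(ENNReal.ofReal t - a).toReal, γ u := by
  have hsub : ENNReal.ofReal t - a' < ENNReal.ofReal t - a :=
    (tsub_le_tsub_left (min_le_left a' _) _).trans_lt <|
      (ENNReal.cancel_of_ne (ENNReal.sub_ne_top ENNReal.ofReal_ne_top)).tsub_lt_tsub_left_of_le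
        (min_le_right _ _) (lt_min h ha)
  exact integral_lt_integral_of_pos_of_lt hγ_pos (intervalIntegrable_exposure hγ_int ht a)
    toReal_nonneg (ENNReal.toReal_strict_mono (ENNReal.sub_ne_top ENNReal.ofReal_ne_top) hsub)

end Contagion

theorem integral_clusterHazard {n : ℕ} {β₁ β₂ θ₁ θ₂ : ℝ} {α γ : ℝ → ℝ} {t : ℝ}
    (hα_int : IntervalIntegrable α volume 0 t) (hγ_int : IntervalIntegrable γ volume 0 t)
    (ht : 0 ≤ t) (x l : Fin n → ℝ) (τ : Fin n → ℝ≥0∞) (i : Fin n) :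
    ∫ s in (0:ℝ)..t, clusterHazard n β₁ β₂ θ₁ θ₂ α γ x l τ i s
      = Real.exp (β₁ * x i + θ₁ * l i) * ((∫ s in (0:ℝ)..t, α s) + ∑ j ∈ Finset.univ.erase i,
          (∫ u in (0:ℝ)..(ENNReal.ofReal t - τ j).toReal, γ u) * Real.exp (β₂ * x j + θ₂ * l j)) := by
  have hkernel : ∀ j ∈ Finset.univ.erase i, IntervalIntegrable
      (fun s => contagionKernel γ (τ j) s * Real.exp (β₂ * x j + θ₂ * l j)) volume 0 t :=
    fun j _ => (intervalIntegrable_contagionKernel hγ_int ht (τ j)).mul_const _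
  have hsum : IntervalIntegrable (fun s => ∑ j ∈ Finset.univ.erase i,
      contagionKernel γ (τ j) s * Real.exp (β₂ * x j + θ₂ * l j)) volume 0 t := by
    simpa only [Finset.sum_fn] using IntervalIntegrable.sum _ hkernel
  calc ∫ s in (0:ℝ)..t, clusterHazard n β₁ β₂ θ₁ θ₂ α γ x l τ i s
      = ∫ s in (0:ℝ)..t, Real.exp (β₁ * x i + θ₁ * l i) * (α s + ∑ j ∈ Finset.univ.erase i,
          contagionKernel γ (τ j) s * Real.exp (β₂ * x j + θ₂ * l j)) := by
        simp only [clusterHazard, contagionKernel, ite_mul, zero_mul]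
    _ = _ := by
        rw [intervalIntegral.integral_const_mul, integral_add hα_int hsum,
          integral_finsetSum hkernel]
        simp only [intervalIntegral.integral_mul_const, integral_contagionKernel ht]

theorem integral_clusterHazard_lt_of_lt {n : ℕ} {β₁ β₂ θ₁ θ₂ : ℝ} {α γ : ℝ → ℝ} {t : ℝ}
    (hα_int : IntervalIntegrable α volume 0 t) (hγ_pos : ∀ s, 0 < s → 0 < γ s)
    (hγ_int : IntervalIntegrable γ volume 0 t) (ht : 0 ≤ t) (x l : Fin n → ℝ) (i : Fin n)
    {τ τ' : Fin n → ℝ≥0∞} (hle : ∀ j, j ≠ i → τ j ≤ τ' j)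
    (hstrict : ∃ j, j ≠ i ∧ τ j < τ' j ∧ τ j < ENNReal.ofReal t) :
    ∫ s in (0:ℝ)..t, clusterHazard n β₁ β₂ θ₁ θ₂ α γ x l τ' i s
      < ∫ s in (0:ℝ)..t, clusterHazard n β₁ β₂ θ₁ θ₂ α γ x l τ i s := by
  rw [integral_clusterHazard hα_int hγ_int ht, integral_clusterHazard hα_int hγ_int ht]
  obtain ⟨j, hji, hlt, hjt⟩ := hstrict
  refine mul_lt_mul_of_pos_left (add_lt_add_right (Finset.sum_lt_sum (fun k hk => ?_)
    ⟨j, Finset.mem_erase.2 ⟨hji, Finset.mem_univ j⟩, ?_⟩) _) (Real.exp_pos _)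
  · exact mul_le_mul_of_nonneg_right
      (integral_exposure_le_of_le hγ_pos hγ_int ht (hle k (Finset.ne_of_mem_erase hk)))
      (Real.exp_pos _).le
  · exact mul_lt_mul_of_pos_right (integral_exposure_lt_of_lt hγ_pos hγ_int ht hlt hjt)
      (Real.exp_pos _)

theorem exposure_controlled_contagion_effect_pos_general
    (n : ℕ) (β₁ β₂ θ₁ θ₂ : ℝ) (α γ : ℝ → ℝ)
    (hα_int : ∀ c : ℝ, 0 ≤ c → IntervalIntegrable α volume 0 c)
    (hγ_pos : ∀ s : ℝ, 0 < s → 0 < γ s)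
    (hγ_int : ∀ c : ℝ, 0 ≤ c → IntervalIntegrable γ volume 0 c)
    (l : Fin n → ℝ) (i : Fin n) (t : ℝ) (ht : 0 ≤ t)
    (τ τ' : Fin n → ℝ≥0∞)
    (hle : ∀ j, j ≠ i → τ j ≤ τ' j)
    (hstrict : ∃ j, j ≠ i ∧ τ j < τ' j ∧ τ j < ENNReal.ofReal t) :
    0 < expectedOutcome n β₁ β₂ θ₁ θ₂ α γ (fun _ => 0) l τ i t
      - expectedOutcome n β₁ β₂ θ₁ θ₂ α γ (fun _ => 0) l τ' i t := by
  have hlt := integral_clusterHazard_lt_of_lt (β₁ := β₁) (β₂ := β₂) (θ₁ := θ₁) (θ₂ := θ₂)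
    (hα_int t ht) hγ_pos (hγ_int t ht) ht (fun _ => 0) l i hle hstrict
  simpa [expectedOutcome] using Real.exp_lt_exp.2 (neg_lt_neg hlt)

/-- Positive exposure-controlled contagion effect (Corollary 4): with all treatments
zero and `γ > 0` on `(0,∞)`, if the history `h` has everywhere earlier-or-equal
infection times than `h'`, strictly earlier for some `j ≠ i` infected before `t`,
then `E[Y_i(t; 0, h)] - E[Y_i(t; 0, h')] > 0`. -/
theorem exposure_controlled_contagion_effect_pos
    (n : ℕ) (β₁ β₂ θ₁ θ₂ : ℝ) (α γ : ℝ → ℝ)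
    (hα_nonneg : ∀ s, 0 ≤ s → 0 ≤ α s)
    (hα_int : ∀ c : ℝ, 0 ≤ c → IntervalIntegrable α volume 0 c)
    (hγ_pos : ∀ s : ℝ, 0 < s → 0 < γ s)
    (hγ_int : ∀ c : ℝ, 0 ≤ c → IntervalIntegrable γ volume 0 c)
    (l : Fin n → ℝ) (i : Fin n) (t : ℝ) (ht : 0 ≤ t)
    (τ τ' : Fin n → ℝ≥0∞)
    (hτ_pos : ∀ k, 0 < τ k) (hτ'_pos : ∀ k, 0 < τ' k)
    (hle : ∀ j, j ≠ i → τ j ≤ τ' j)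
    (hstrict : ∃ j, j ≠ i ∧ τ j < τ' j ∧ τ j < ENNReal.ofReal t) :
    0 < expectedOutcome n β₁ β₂ θ₁ θ₂ α γ (fun _ => 0) l τ i t
      - expectedOutcome n β₁ β₂ θ₁ θ₂ α γ (fun _ => 0) l τ' i t :=
  exposure_controlled_contagion_effect_pos_general n β₁ β₂ θ₁ θ₂ α γ hα_int hγ_pos hγ_int l i t ht τ
    τ' hle hstrict
end

section
/- Under the pairwise Cox-type hazard model, with exposure-controlled expected potential infection outcome E[Y_i(t; x, h)] = 1 − exp(−∫₀ᵗ λ_i(s | x, h, l) ds), fix t > 0, treatments x_{(i)} of individuals other than i, an infection history h with times (t_j)_{j≠i}, and covariates l, and set A = ∫₀ᵗ exp(θ₁l_i)·(α(s) + Σ_{j≠i} y_j(s)·γ(s − t_j)·exp(β₂x_j + θ₂l_j)) ds. If 0 < A < ∞, then the exposure-controlled susceptibility effect SE_i(t, x_{(i)}, h) = E[Y_i(t; x_i = 1, x_{(i)}, h)] − E[Y_i(t; x_i = 0, x_{(i)}, h)] satisfies: SE_i < 0 if β₁ < 0, SE_i = 0 if β₁ = 0, and SE_i > 0 if β₁ >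 0. That is, the exposure-controlled susceptibility effect has the same sign as β₁. -/
open MeasureTheory ENNReal

/-!
Individual `i`'s own treatment enters its hazard only through the factor `exp(β₁ x_i)`, so
switching `x_i` from `0` to `1` multiplies the cumulative hazard `A` by `exp β₁`. The effect is
therefore `exp(-A) - exp(-exp(β₁) A)`, which for `A > 0` is strictly increasing in `β₁` and
vanishes at `β₁ = 0`.
-/

section

variable (n : ℕ) (β₁ β₂ θ₁ θ₂ : ℝ) (α γ : ℝ → ℝ) (x l : Fin n → ℝ) (τ : Fin n → ℝ≥0∞)
  (i : Fin n)

theorem clusterHazard_update_self (a s : ℝ) :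
    clusterHazard n β₁ β₂ θ₁ θ₂ α γ (Function.update x i a) l τ i s
      = Real.exp (β₁ * a) * clusterHazard n β₁ β₂ θ₁ θ₂ α γ (Function.update x i 0) l τ i s := by
  have hothers : ∀ j ∈ Finset.univ.erase i, Function.update x i a j = Function.update x i 0 j :=
    fun j hj => by
      rw [Function.update_of_ne (Finset.ne_of_mem_erase hj),
        Function.update_of_ne (Finset.ne_of_mem_erase hj)]
  unfold clusterHazard
  rw [Finset.sum_congr rfl fun j hj => by rw [hothers j hj], Function.update_self,
    Function.update_self, mul_zero, zero_add, ← mul_assoc, ← Real.exp_add]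

theorem expectedOutcome_update_self (a t : ℝ) :
    expectedOutcome n β₁ β₂ θ₁ θ₂ α γ (Function.update x i a) l τ i t
      = 1 - Real.exp (-(Real.exp (β₁ * a) *
          ∫ s in (0:ℝ)..t, clusterHazard n β₁ β₂ θ₁ θ₂ α γ (Function.update x i 0) l τ i s)) := by
  rw [expectedOutcome, ← intervalIntegral.integral_const_mul]
  rw [intervalIntegral.integral_congr fun s _ => clusterHazard_update_self n β₁ β₂ θ₁ θ₂ α γ x l τ i a s]

end

theorem strictMono_exp_neg_sub_exp_neg_exp_mul {A : ℝ} (hA : 0 < A) :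
    StrictMono fun b : ℝ => Real.exp (-A) - Real.exp (-(Real.exp b * A)) := by
  intro a b hab
  dsimp only
  gcongr

theorem exposure_controlled_susceptibility_effect_sign_general
    (n : ℕ) (β₁ β₂ θ₁ θ₂ : ℝ) (α γ : ℝ → ℝ)
    (x l : Fin n → ℝ) (τ : Fin n → ℝ≥0∞)
    (i : Fin n) (t : ℝ)
    (hA_pos : 0 < ∫ s in (0:ℝ)..t,
      clusterHazard n β₁ β₂ θ₁ θ₂ α γ (Function.update x i 0) l τ i s) :
    (β₁ < 0 →
      expectedOutcome n β₁ β₂ θ₁ θ₂ α γ (Function.update x i 1) l τ i t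
        - expectedOutcome n β₁ β₂ θ₁ θ₂ α γ (Function.update x i 0) l τ i t < 0) ∧
    (β₁ = 0 →
      expectedOutcome n β₁ β₂ θ₁ θ₂ α γ (Function.update x i 1) l τ i t
        - expectedOutcome n β₁ β₂ θ₁ θ₂ α γ (Function.update x i 0) l τ i t = 0) ∧
    (0 < β₁ →
      0 < expectedOutcome n β₁ β₂ θ₁ θ₂ α γ (Function.update x i 1) l τ i t
        - expectedOutcome n β₁ β₂ θ₁ θ₂ α γ (Function.update x i 0) l τ i t) := by
  set A := ∫ s in (0:ℝ)..t, clusterHazard n β₁ β₂ θ₁ θ₂ α γ (Function.update x i 0) l τ i s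
  set effect : ℝ → ℝ := fun b => Real.exp (-A) - Real.exp (-(Real.exp b * A))
  have heffect : expectedOutcome n β₁ β₂ θ₁ θ₂ α γ (Function.update x i 1) l τ i t
      - expectedOutcome n β₁ β₂ θ₁ θ₂ α γ (Function.update x i 0) l τ i t = effect β₁ := by
    simp only [expectedOutcome_update_self, effect, mul_one, mul_zero, Real.exp_zero, one_mul]
    ring
  have hmono : StrictMono effect := strictMono_exp_neg_sub_exp_neg_exp_mul hA_pos
  have hzero : effect 0 = 0 := by simp only [effect, Real.exp_zero, one_mul, sub_self]
  rw [heffect]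
  refine ⟨fun hβ => hzero ▸ hmono hβ, fun hβ => hβ ▸ hzero, fun hβ => hzero ▸ hmono hβ⟩

/-- Sign of the exposure-controlled susceptibility effect (Corollary 5): with
`A = ∫₀ᵗ exp(θ₁ l_i)(α(s) + Σ_{j≠i} y_j(s) γ(s - t_j) exp(β₂ x_j + θ₂ l_j)) ds`
finite and positive, the effect
`SE_i = E[Y_i(t; x_i = 1, x_{(i)}, h)] - E[Y_i(t; x_i = 0, x_{(i)}, h)]`
is negative, zero, or positive according to the sign of `β₁`. -/
theorem exposure_controlled_susceptibility_effect_sign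
    (n : ℕ) (β₁ β₂ θ₁ θ₂ : ℝ) (α γ : ℝ → ℝ)
    (x l : Fin n → ℝ) (τ : Fin n → ℝ≥0∞)
    (hτ_pos : ∀ k, 0 < τ k)
    (i : Fin n) (t : ℝ) (ht : 0 < t)
    (hA_int : IntervalIntegrable
      (fun s => clusterHazard n β₁ β₂ θ₁ θ₂ α γ (Function.update x i 0) l τ i s)
      volume 0 t)
    (hA_pos : 0 < ∫ s in (0:ℝ)..t,
      clusterHazard n β₁ β₂ θ₁ θ₂ α γ (Function.update x i 0) l τ i s) :
    (β₁ < 0 →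
      expectedOutcome n β₁ β₂ θ₁ θ₂ α γ (Function.update x i 1) l τ i t
        - expectedOutcome n β₁ β₂ θ₁ θ₂ α γ (Function.update x i 0) l τ i t < 0) ∧
    (β₁ = 0 →
      expectedOutcome n β₁ β₂ θ₁ θ₂ α γ (Function.update x i 1) l τ i t
        - expectedOutcome n β₁ β₂ θ₁ θ₂ α γ (Function.update x i 0) l τ i t = 0) ∧
    (0 < β₁ →
      0 < expectedOutcome n β₁ β₂ θ₁ θ₂ α γ (Function.update x i 1) l τ i t
        - expectedOutcome n β₁ β₂ θ₁ θ₂ α γ (Function.update x i 0) l τ i t) :=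
  exposure_controlled_susceptibility_effect_sign_general n β₁ β₂ θ₁ θ₂ α γ x l τ i t hA_pos
end

section
/- Under the pairwise Cox-type hazard model, with exposure-controlled expected potential infection outcome E[Y_i(t; x, h)] = 1 − exp(−∫₀ᵗ λ_i(s | x, h, l) ds), fix t > 0, the treatment x_i of individual i, an infection history h with times (t_j)_{j≠i}, and covariates l, and set B = ∫₀ᵗ exp(β₁x_i + θ₁l_i)·α(s) ds and C = ∫₀ᵗ exp(β₁x_i + θ₁l_i)·Σ_{j≠i} y_j(s)·γ(s − t_j)·exp(θ₂l_j) ds. If B < ∞ and 0 < C < ∞, then the exposure-controlled infectiousness effect IE_i(t, x_i, h) = E[Y_i(t; x_i, x_{(i)} = 1, h)] − E[Y_i(t; x_i, x_{(i)} = 0, h)] (contrasting all other individuals treated versus all untreated) satisfies: IE_i < 0 if β₂ < 0, IE_i = 0 if β₂ = 0, and IE_i > 0 if β₂ > 0. That is, the exposure-controlled infectiousness effect has the same sign as β₂. -/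
open MeasureTheory ENNReal

/-!
When every other individual receives the same treatment `c`, the treatment enters the hazard of
`i` only through the factor `exp (β₂ c)` on the infectious-pressure term, so the cumulative hazard
is `B + exp (β₂ c) · C`. Since `u ↦ 1 - exp (-(B + u C))` is strictly increasing for `C > 0`, the
effect `IE_i` has the sign of `exp β₂ - exp 0`, that is, of `β₂`.
-/

/-- `Σ_{j ≠ i} y_j(s) γ(s - t_j) exp(θ₂ l_j)`: the exposure of `i` with the treatment factors
of the infectious individuals removed. -/
noncomputable def infectiousPressure (n : ℕ) (θ₂ : ℝ) (γ : ℝ → ℝ) (l : Fin n → ℝ)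
    (τ : Fin n → ℝ≥0∞) (i : Fin n) (s : ℝ) : ℝ :=
  ∑ j ∈ Finset.univ.erase i,
    if τ j < ENNReal.ofReal s then γ (s - (τ j).toReal) * Real.exp (θ₂ * l j) else 0

section OthersTreatedAlike

variable {n : ℕ} {β₁ β₂ θ₁ θ₂ : ℝ} {α γ : ℝ → ℝ} {xi c : ℝ} {l : Fin n → ℝ}
  {τ : Fin n → ℝ≥0∞} {i : Fin n} {t : ℝ}

theorem clusterHazard_others_const (s : ℝ) :
    clusterHazard n β₁ β₂ θ₁ θ₂ α γ (fun j => if j = i then xi else c) l τ i s =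
      Real.exp (β₁ * xi + θ₁ * l i) * α s +
        Real.exp (β₂ * c) *
          (Real.exp (β₁ * xi + θ₁ * l i) * infectiousPressure n θ₂ γ l τ i s) := by
  simp only [clusterHazard, infectiousPressure, if_true, mul_add, Finset.mul_sum]
  congr 1
  refine Finset.sum_congr rfl fun j hj => ?_
  rw [if_neg (Finset.ne_of_mem_erase hj)]
  split_ifs
  · rw [Real.exp_add (β₂ * c)]; ring
  · ring

theorem integral_clusterHazard_others_const
    (hB : IntervalIntegrable (fun s => Real.exp (β₁ * xi + θ₁ * l i) * α s) volume 0 t)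
    (hC : IntervalIntegrable
      (fun s => Real.exp (β₁ * xi + θ₁ * l i) * infectiousPressure n θ₂ γ l τ i s) volume 0 t) :
    ∫ s in (0:ℝ)..t,
        clusterHazard n β₁ β₂ θ₁ θ₂ α γ (fun j => if j = i then xi else c) l τ i s =
      (∫ s in (0:ℝ)..t, Real.exp (β₁ * xi + θ₁ * l i) * α s) +
        Real.exp (β₂ * c) *
          ∫ s in (0:ℝ)..t, Real.exp (β₁ * xi + θ₁ * l i) * infectiousPressure n θ₂ γ l τ i s := by
  simp only [clusterHazard_others_const]
  rw [intervalIntegral.integral_add hB (hC.const_mul _),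
    intervalIntegral.integral_const_mul (Real.exp (β₂ * c))]

theorem expectedOutcome_others_const
    (hB : IntervalIntegrable (fun s => Real.exp (β₁ * xi + θ₁ * l i) * α s) volume 0 t)
    (hC : IntervalIntegrable
      (fun s => Real.exp (β₁ * xi + θ₁ * l i) * infectiousPressure n θ₂ γ l τ i s) volume 0 t) :
    expectedOutcome n β₁ β₂ θ₁ θ₂ α γ (fun j => if j = i then xi else c) l τ i t =
      1 - Real.exp (-((∫ s in (0:ℝ)..t, Real.exp (β₁ * xi + θ₁ * l i) * α s) +
        Real.exp (β₂ * c) *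
          ∫ s in (0:ℝ)..t, Real.exp (β₁ * xi + θ₁ * l i) * infectiousPressure n θ₂ γ l τ i s)) := by
  rw [expectedOutcome, integral_clusterHazard_others_const hB hC]

end OthersTreatedAlike

theorem strictMono_one_sub_exp_neg_add_mul {b c : ℝ} (hc : 0 < c) :
    StrictMono fun u : ℝ => 1 - Real.exp (-(b + u * c)) := fun u v huv => by
  have : u * c < v * c := mul_lt_mul_of_pos_right huv hc
  simpa using Real.exp_lt_exp.mpr (show -(b + v * c) < -(b + u * c) by linarith)

theorem exposure_controlled_infectiousness_effect_sign_general
    (n : ℕ) (β₁ β₂ θ₁ θ₂ : ℝ) (α γ : ℝ → ℝ)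
    (xi : ℝ) (l : Fin n → ℝ) (τ : Fin n → ℝ≥0∞)
    (i : Fin n) (t : ℝ)
    (hB_int : IntervalIntegrable
      (fun s => Real.exp (β₁ * xi + θ₁ * l i) * α s) volume 0 t)
    (hC_int : IntervalIntegrable
      (fun s => Real.exp (β₁ * xi + θ₁ * l i) *
        ∑ j ∈ Finset.univ.erase i,
          (if τ j < ENNReal.ofReal s then γ (s - (τ j).toReal) * Real.exp (θ₂ * l j)
           else 0)) volume 0 t)
    (hC_pos : 0 < ∫ s in (0:ℝ)..t,
      Real.exp (β₁ * xi + θ₁ * l i) *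
        ∑ j ∈ Finset.univ.erase i,
          (if τ j < ENNReal.ofReal s then γ (s - (τ j).toReal) * Real.exp (θ₂ * l j)
           else 0)) :
    (β₂ < 0 →
      expectedOutcome n β₁ β₂ θ₁ θ₂ α γ (fun j => if j = i then xi else 1) l τ i t
        - expectedOutcome n β₁ β₂ θ₁ θ₂ α γ (fun j => if j = i then xi else 0) l τ i t
        < 0) ∧
    (β₂ = 0 →
      expectedOutcome n β₁ β₂ θ₁ θ₂ α γ (fun j => if j = i then xi else 1) l τ i t
        - expectedOutcome n β₁ β₂ θ₁ θ₂ α γ (fun j => if j = i then xi else 0) l τ i t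
        = 0) ∧
    (0 < β₂ →
      0 < expectedOutcome n β₁ β₂ θ₁ θ₂ α γ (fun j => if j = i then xi else 1) l τ i t
        - expectedOutcome n β₁ β₂ θ₁ θ₂ α γ (fun j => if j = i then xi else 0) l τ i t) := by
  have hmono := strictMono_one_sub_exp_neg_add_mul
    (b := ∫ s in (0:ℝ)..t, Real.exp (β₁ * xi + θ₁ * l i) * α s) hC_pos
  rw [expectedOutcome_others_const hB_int hC_int, expectedOutcome_others_const hB_int hC_int,
    mul_one, mul_zero, Real.exp_zero]
  refine ⟨fun hβ => ?_, fun hβ => ?_, fun hβ => ?_⟩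
  · exact sub_neg.mpr (hmono (Real.exp_lt_one_iff.mpr hβ))
  · rw [hβ, Real.exp_zero, sub_self]
  · exact sub_pos.mpr (hmono (Real.one_lt_exp_iff.mpr hβ))

/-- Sign of the exposure-controlled infectiousness effect (Corollary 6): with
`B = ∫₀ᵗ exp(β₁ x_i + θ₁ l_i) α(s) ds` finite and
`C = ∫₀ᵗ exp(β₁ x_i + θ₁ l_i) Σ_{j≠i} y_j(s) γ(s - t_j) exp(θ₂ l_j) ds` finite and
positive, the effect `IE_i = E[Y_i(t; x_i, x_{(i)} = 1, h)] - E[Y_i(t; x_i, x_{(i)} = 0, h)]`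
(all others treated versus all untreated) is negative, zero, or positive according to
the sign of `β₂`. -/
theorem exposure_controlled_infectiousness_effect_sign
    (n : ℕ) (β₁ β₂ θ₁ θ₂ : ℝ) (α γ : ℝ → ℝ)
    (xi : ℝ) (l : Fin n → ℝ) (τ : Fin n → ℝ≥0∞)
    (hτ_pos : ∀ k, 0 < τ k)
    (i : Fin n) (t : ℝ) (ht : 0 < t)
    (hB_int : IntervalIntegrable
      (fun s => Real.exp (β₁ * xi + θ₁ * l i) * α s) volume 0 t)
    (hC_int : IntervalIntegrable
      (fun s => Real.exp (β₁ * xi + θ₁ * l i) *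
        ∑ j ∈ Finset.univ.erase i,
          (if τ j < ENNReal.ofReal s then γ (s - (τ j).toReal) * Real.exp (θ₂ * l j)
           else 0)) volume 0 t)
    (hC_pos : 0 < ∫ s in (0:ℝ)..t,
      Real.exp (β₁ * xi + θ₁ * l i) *
        ∑ j ∈ Finset.univ.erase i,
          (if τ j < ENNReal.ofReal s then γ (s - (τ j).toReal) * Real.exp (θ₂ * l j)
           else 0)) :
    (β₂ < 0 →
      expectedOutcome n β₁ β₂ θ₁ θ₂ α γ (fun j => if j = i then xi else 1) l τ i t
        - expectedOutcome n β₁ β₂ θ₁ θ₂ α γ (fun j => if j = i then xi else 0) l τ i t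
        < 0) ∧
    (β₂ = 0 →
      expectedOutcome n β₁ β₂ θ₁ θ₂ α γ (fun j => if j = i then xi else 1) l τ i t
        - expectedOutcome n β₁ β₂ θ₁ θ₂ α γ (fun j => if j = i then xi else 0) l τ i t
        = 0) ∧
    (0 < β₂ →
      0 < expectedOutcome n β₁ β₂ θ₁ θ₂ α γ (fun j => if j = i then xi else 1) l τ i t
        - expectedOutcome n β₁ β₂ θ₁ θ₂ α γ (fun j => if j = i then xi else 0) l τ i t) :=
  exposure_controlled_infectiousness_effect_sign_general n β₁ β₂ θ₁ θ₂ α γ xi l τ i t hB_int hC_int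
    hC_pos
end
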